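/- arXiv:1107.5282 — 2 statements merged into one kernel-verified Lean document; each statement's English description precedes it below -/
import Mathlib

section
/- Let m, n, c be positive integers with gcd(m,c) ≠ gcd(n,c). Then T(m,n;c) = 0. -/
/-!
Writing `c_u(m) = (μ * D_m)(u)` with `D_m(d) = [d ∣ m] d` shows that `u ↦ c_u(m)`, hence the
summand of `T`, is multiplicative, so `T(m,n;·)` is multiplicative and it suffices to find a
vanishing prime-power factor. If `gcd(m,c) ≠ gcd(n,c)`, after swapping `m` and `n` some `p^k`
divides `n` and `c` but not `m`. In `T(m,n;p^e)` with `k ≤ e`, the terms `u = p^j`, `j > k`, vanish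
because `p²` divides `u / d` for every `d ∣ gcd(u,m)`, so `μ` kills all of `c_u(m)`; for `u ∣ p^k`
we have `u ∣ n`, so `c_u(n) = φ(u)` and the term is `c_u(m)`. What is left is
`∑_{u ∣ p^k} c_u(m) = D_m(p^k) = 0` by Möbius inversion.
-/

open ArithmeticFunction

/-- Ramanujan's sum `c_q(n) = ∑_{d ∣ (q,n)} μ(q/d) d`. -/
def ramanujanSum (q n : ℕ) : ℤ :=
  ∑ d ∈ (Nat.gcd q n).divisors, (moebius (q / d) : ℤ) * (d : ℤ)

/-- `T(m,n;c) = ∑_{u ∣ c} φ(u)⁻¹ c_u(m) c_u(n)`. -/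
noncomputable def Tsum (m n c : ℕ) : ℝ :=
  ∑ u ∈ c.divisors, ((Nat.totient u : ℝ))⁻¹ * (ramanujanSum u m : ℝ) * (ramanujanSum u n : ℝ)

open Finset
open scoped ArithmeticFunction.Moebius ArithmeticFunction.zeta

def idOnDivisors (m : ℕ) : ArithmeticFunction ℤ :=
  ⟨fun d => if d ∣ m then (d : ℤ) else 0, by simp⟩

lemma idOnDivisors_apply (m d : ℕ) : idOnDivisors m d = if d ∣ m then (d : ℤ) else 0 := rfl

lemma isMultiplicative_idOnDivisors (m : ℕ) : IsMultiplicative (idOnDivisors m) := by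
  refine ⟨by simp [idOnDivisors_apply], fun {x y} hxy => ?_⟩
  have hdvd : x * y ∣ m ↔ x ∣ m ∧ y ∣ m :=
    ⟨fun h => ⟨(dvd_mul_right x y).trans h, (dvd_mul_left y x).trans h⟩,
      fun h => hxy.mul_dvd_of_dvd_of_dvd h.1 h.2⟩
  simp only [idOnDivisors_apply, hdvd, ite_and]
  split_ifs <;> simp

lemma ramanujanSum_eq_moebius_mul_apply (q m : ℕ) :
    ramanujanSum q m = ((μ : ArithmeticFunction ℤ) * idOnDivisors m) q := by
  rcases q.eq_zero_or_pos with rfl | hq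
  · simp [ramanujanSum]
  have hdiv : (q.gcd m).divisors = {d ∈ q.divisors | d ∣ m} := by
    ext d
    simp [Nat.dvd_gcd_iff, hq.ne']
  rw [ramanujanSum, mul_apply,
    Nat.sum_divisorsAntidiagonal' (fun x y => (μ x : ℤ) * idOnDivisors m y), hdiv, sum_filter]
  simp only [idOnDivisors_apply, mul_ite, mul_zero]

lemma ramanujanSum_mul_of_coprime (m : ℕ) {x y : ℕ} (h : x.Coprime y) :
    ramanujanSum (x * y) m = ramanujanSum x m * ramanujanSum y m := by
  simp only [ramanujanSum_eq_moebius_mul_apply]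
  exact (isMultiplicative_moebius.mul (isMultiplicative_idOnDivisors m)).map_mul_of_coprime h

lemma sum_divisors_ramanujanSum (k m : ℕ) :
    ∑ d ∈ k.divisors, ramanujanSum d m = idOnDivisors m k := by
  simp only [ramanujanSum_eq_moebius_mul_apply, ← coe_zeta_mul_apply, ← mul_assoc,
    coe_zeta_mul_moebius, one_mul]

lemma ramanujanSum_eq_totient_of_dvd {q n : ℕ} (h : q ∣ n) : ramanujanSum q n = q.totient := by
  rcases q.eq_zero_or_pos with rfl | hq
  · simp [ramanujanSum]
  have hsum : ∀ k : ℕ, k > 0 → ∑ d ∈ k.divisors, (d.totient : ℤ) = k :=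
    fun k _ => by exact_mod_cast Nat.sum_totient k
  have hinv := sum_eq_iff_sum_mul_moebius_eq.mp hsum q hq
  simp only [Int.cast_id] at hinv
  rw [ramanujanSum, Nat.gcd_eq_left h, ← hinv,
    Nat.sum_divisorsAntidiagonal' (fun x y => (μ x : ℤ) * y)]

lemma ramanujanSum_eq_zero_of_not_squarefree {q m : ℕ} (h : ¬ Squarefree (q / q.gcd m)) :
    ramanujanSum q m = 0 := by
  refine sum_eq_zero fun d hd => ?_
  have hdvd : q / q.gcd m ∣ q / d :=
    Nat.div_dvd_div_left (Nat.gcd_dvd_left q m) (Nat.dvd_of_mem_divisors hd)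
  rw [moebius_eq_zero_of_not_squarefree fun hsq => h (hsq.squarefree_of_dvd hdvd), zero_mul]

lemma ramanujanSum_prime_pow_eq_zero {p k j m : ℕ} (hp : p.Prime) (hm : ¬ p ^ k ∣ m)
    (hkj : k < j) : ramanujanSum (p ^ j) m = 0 := by
  apply ramanujanSum_eq_zero_of_not_squarefree
  obtain ⟨i, hij, hi⟩ := (Nat.dvd_prime_pow hp).mp (Nat.gcd_dvd_left (p ^ j) m)
  have hik : i < k := by
    by_contra! hki
    exact hm ((pow_dvd_pow p hki).trans (hi ▸ Nat.gcd_dvd_right _ _))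
  rw [hi, Nat.pow_div hij hp.pos, Nat.squarefree_pow_iff hp.ne_one (by omega)]
  omega

noncomputable def Tsum.summand (m n : ℕ) : ArithmeticFunction ℝ :=
  ⟨fun u => (u.totient : ℝ)⁻¹ * ramanujanSum u m * ramanujanSum u n, by simp⟩

lemma Tsum.isMultiplicative_summand (m n : ℕ) : IsMultiplicative (Tsum.summand m n) := by
  refine ⟨by simp [Tsum.summand, ramanujanSum], fun {x y} h => ?_⟩
  simp only [Tsum.summand, coe_mk, ramanujanSum_mul_of_coprime _ h, Nat.totient_mul h]
  push_cast
  rw [mul_inv]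
  ring

lemma Tsum_mul_of_coprime (m n : ℕ) {x y : ℕ} (h : x.Coprime y) :
    Tsum m n (x * y) = Tsum m n x * Tsum m n y := by
  have hζ : ∀ c, Tsum m n c = (Tsum.summand m n * ζ) c := fun c => by
    rw [Tsum, coe_mul_zeta_apply]; rfl
  simp only [hζ]
  exact ((Tsum.isMultiplicative_summand m n).mul isMultiplicative_zeta.natCast).map_mul_of_coprime h

lemma Tsum_comm (m n c : ℕ) : Tsum m n c = Tsum n m c :=
  sum_congr rfl fun _ _ => mul_right_comm _ _ _

lemma Tsum_prime_pow_eq_zero {p k e m n : ℕ} (hp : p.Prime) (hm : ¬ p ^ k ∣ m) (hn : p ^ k ∣ n)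
    (hke : k ≤ e) : Tsum m n (p ^ e) = 0 := by
  calc Tsum m n (p ^ e)
      = ∑ d ∈ (p ^ k).divisors, (d.totient : ℝ)⁻¹ * ramanujanSum d m * ramanujanSum d n := by
        refine (sum_subset (Nat.divisors_subset_of_dvd (pow_ne_zero e hp.ne_zero)
          (pow_dvd_pow p hke)) fun d hd hdk => ?_).symm
        obtain ⟨j, -, rfl⟩ := (Nat.dvd_prime_pow hp).mp (Nat.dvd_of_mem_divisors hd)
        have hkj : k < j := by
          by_contra! hjk
          exact hdk (Nat.mem_divisors.mpr ⟨pow_dvd_pow p hjk, pow_ne_zero k hp.ne_zero⟩)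
        simp [ramanujanSum_prime_pow_eq_zero hp hm hkj]
    _ = ∑ d ∈ (p ^ k).divisors, (ramanujanSum d m : ℝ) := by
        refine sum_congr rfl fun d hd => ?_
        have hφ : (d.totient : ℝ) ≠ 0 := by
          exact_mod_cast (Nat.totient_pos.mpr (Nat.pos_of_mem_divisors hd)).ne'
        rw [ramanujanSum_eq_totient_of_dvd ((Nat.dvd_of_mem_divisors hd).trans hn), Int.cast_natCast]
        field_simp
    _ = 0 := by
        rw [← Int.cast_sum, sum_divisors_ramanujanSum, idOnDivisors_apply, if_neg hm, Int.cast_zero]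

lemma Tsum_eq_zero_of_prime_pow_dvd {p k m n c : ℕ} (hp : p.Prime) (hc : c ≠ 0)
    (hm : ¬ p ^ k ∣ m) (hn : p ^ k ∣ n) (hkc : p ^ k ∣ c) : Tsum m n c = 0 := by
  rw [← Nat.ordProj_mul_ordCompl_eq_self c p,
    Tsum_mul_of_coprime m n ((Nat.coprime_ordCompl hp hc).pow_left _),
    Tsum_prime_pow_eq_zero hp hm hn ((hp.pow_dvd_iff_le_factorization hc).mp hkc), zero_mul]

theorem Tsum_eq_zero_of_gcd_ne_general
    (m n c : ℕ) (hc : 0 < c)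
    (h : Nat.gcd m c ≠ Nat.gcd n c) :
    Tsum m n c = 0 := by
  wlog hnm : ¬ Nat.gcd n c ∣ Nat.gcd m c generalizing m n
  · rw [Tsum_comm]
    exact this n m h.symm fun hmn => h (Nat.dvd_antisymm hmn (not_not.mp hnm))
  obtain ⟨p, k, hp, hpn, hpm⟩ : ∃ p k, p.Prime ∧ p ^ k ∣ Nat.gcd n c ∧ ¬ p ^ k ∣ Nat.gcd m c := by
    rw [Nat.dvd_iff_prime_pow_dvd_dvd] at hnm
    push Not at hnm
    exact hnm
  have hpc : p ^ k ∣ c := hpn.trans (Nat.gcd_dvd_right n c)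
  exact Tsum_eq_zero_of_prime_pow_dvd hp hc.ne' (fun hm => hpm (Nat.dvd_gcd hm hpc))
    (hpn.trans (Nat.gcd_dvd_left n c)) hpc

theorem Tsum_eq_zero_of_gcd_ne
    (m n c : ℕ) (hm : 0 < m) (hn : 0 < n) (hc : 0 < c)
    (h : Nat.gcd m c ≠ Nat.gcd n c) :
    Tsum m n c = 0 :=
  Tsum_eq_zero_of_gcd_ne_general m n c hc h
end

section
/- Let γ = (a b; c d) ∈ SL₂(ℤ) with a·c even and b·d even (i.e. γ lies in the theta group Λ). Then for every η ∈ ℝ and every z ∈ ℍ: θ(η,0,γ(z))·θ(0,0,z) = e(a·b·η²/8)·θ(0,0,γ(z))·∑_{n ∈ ℤ} e((n + a·η/2)²·z/2)·e(n·b·η/2), where γ(z) = (az+b)/(cz+d) and all series converge absolutely. -/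
open Complex

/-- `e(w) = exp(2πiw)`. -/
noncomputable def eC (w : ℂ) : ℂ := Complex.exp (2 * Real.pi * Complex.I * w)

/-- `θ(η,η',z) = ∑_{n ∈ ℤ} e((1/2)(n+η/2)² z) e((n+η/2) η'/2)`. -/
noncomputable def theta2 (η η' : ℝ) (z : ℂ) : ℂ :=
  ∑' n : ℤ, eC (((n : ℂ) + (η : ℂ) / 2) ^ 2 * z / 2) *
    eC (((n : ℂ) + (η : ℂ) / 2) * (η' : ℂ) / 2)

/-!
Up to exponential factors both sides are values of Mathlib's
`jacobiTheta₂ w τ = ∑ₙ exp (2πinw + πin²τ)`, and with `w = (az + b)η/2` the identity reduces to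
`ThetaQuotientInvariant a b c d w z`. In the quotient `θ(w, τ) / θ(0, τ)` the multiplier system
of `θ` (square roots and eighth roots of unity) cancels, so the relation transfers exactly
between `γ` and `T²ᵏγ` (periodicity of `θ`) and between `γ` and `Sγ` (its functional equation
under `τ ↦ -1/τ`). This gives a descent on `|c|`: the parity conditions make `a` and `c` of
opposite parity, so some `T²ᵏ` achieves `|a + 2kc| < |c|`, and `S` then moves that entry into
the bottom row. The descent ends at `c = 0`, where `γ = ±T^b` with `b` even.
-/

open Real

@[simp] lemma eC_zero : eC 0 = 1 := by simp [eC]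

lemma eC_add (x y : ℂ) : eC (x + y) = eC x * eC y := by
  rw [eC, eC, eC, mul_add, Complex.exp_add]

lemma eC_sq_mul_eC (n : ℤ) (ξ ζ τ : ℂ) :
    eC ((n + ξ) ^ 2 * τ / 2) * eC (n * ζ) =
      cexp (π * I * ξ ^ 2 * τ) * jacobiTheta₂_term n (ξ * τ + ζ) τ := by
  simp only [eC, jacobiTheta₂_term, ← Complex.exp_add]
  ring_nf

lemma summable_norm_eC_sq_mul_eC {τ : ℂ} (hτ : 0 < τ.im) (ξ ζ : ℂ) :
    Summable fun n : ℤ => ‖eC ((n + ξ) ^ 2 * τ / 2) * eC (n * ζ)‖ := by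
  simp_rw [eC_sq_mul_eC, norm_mul]
  exact (summable_norm_iff.mpr ((summable_jacobiTheta₂_term_iff _ _).mpr hτ)).mul_left _

lemma tsum_eC_sq_mul_eC (ξ ζ τ : ℂ) :
    ∑' n : ℤ, eC ((n + ξ) ^ 2 * τ / 2) * eC (n * ζ) =
      cexp (π * I * ξ ^ 2 * τ) * jacobiTheta₂ (ξ * τ + ζ) τ := by
  simp_rw [eC_sq_mul_eC]
  exact tsum_mul_left

lemma theta2_eq_jacobiTheta₂ (η η' : ℝ) (τ : ℂ) :
    theta2 η η' τ = eC (η * η' / 4) * cexp (π * I * (η / 2) ^ 2 * τ) *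
      jacobiTheta₂ (η / 2 * τ + η' / 2) τ := by
  have split : ∀ n : ℤ, eC ((n + η / 2) ^ 2 * τ / 2) * eC ((n + η / 2) * η' / 2) =
      eC (η * η' / 4) * (eC ((n + η / 2) ^ 2 * τ / 2) * eC (n * (η' / 2))) := fun n => by
    rw [← eC_add, ← eC_add, ← eC_add]; ring_nf
  rw [theta2, tsum_congr split, tsum_mul_left, tsum_eC_sq_mul_eC, ← mul_assoc]

lemma theta2_zero_right (η : ℝ) (τ : ℂ) :
    theta2 η 0 τ = cexp (π * I * (η / 2) ^ 2 * τ) * jacobiTheta₂ (η / 2 * τ) τ := by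
  simp [theta2_eq_jacobiTheta₂]

lemma theta2_zero_zero (τ : ℂ) : theta2 0 0 τ = jacobiTheta₂ 0 τ := by
  simp [theta2_eq_jacobiTheta₂]

lemma int_mul_add_ne_zero_of_det {a b c d : ℤ} (hdet : a * d - b * c = 1) {z : ℂ}
    (hz : 0 < z.im) : (c : ℂ) * z + d ≠ 0 := by
  intro h
  have hc : c = 0 := by
    have := congrArg Complex.im h
    simp only [add_im, mul_im, intCast_re, intCast_im, zero_mul, add_zero, zero_im,
      mul_eq_zero, hz.ne', or_false] at this
    exact_mod_cast this
  subst hc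
  have hd : d = 0 := by simpa using h
  simp [hd] at hdet

open scoped MatrixGroups in
lemma moebius_im_pos {a b c d : ℤ} (hdet : a * d - b * c = 1) {z : ℂ} (hz : 0 < z.im) :
    0 < (((a : ℂ) * z + b) / ((c : ℂ) * z + d)).im := by
  let γ : SL(2, ℤ) := ⟨!![a, b; c, d], by rw [Matrix.det_fin_two_of]; exact hdet⟩
  have h := (γ • (⟨z, hz⟩ : UpperHalfPlane)).im_pos
  rw [UpperHalfPlane.im, UpperHalfPlane.coe_specialLinearGroup_apply] at h
  simpa [γ] using h

lemma exists_natAbs_add_two_mul_lt {a c : ℤ} (hc : c ≠ 0) (hodd : Odd (a + c)) :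
    ∃ k : ℤ, (a + 2 * k * c).natAbs < c.natAbs := by
  obtain ⟨q, r, rfl, hr0, hr⟩ : ∃ q r : ℤ, a = 2 * c * q + r ∧ 0 ≤ r ∧ r < (2 * c).natAbs :=
    ⟨_, _, (Int.mul_ediv_add_emod a (2 * c)).symm, Int.emod_nonneg _ (by omega),
      Int.emod_lt _ (by omega)⟩
  have shift : ∀ s : ℤ, 2 * c * q + r + 2 * (s - q) * c = r + 2 * s * c := fun s => by ring
  obtain ⟨t, ht⟩ : Odd (r + c) := by
    obtain ⟨t, ht⟩ := hodd
    exact ⟨t - c * q, by linear_combination ht⟩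
  rcases lt_or_ge r c.natAbs with hrc | hrc
  · exact ⟨0 - q, by rw [shift]; omega⟩
  rcases lt_or_gt_of_ne hc with hneg | hpos
  · exact ⟨1 - q, by rw [shift]; omega⟩
  · exact ⟨-1 - q, by rw [shift]; omega⟩

lemma odd_add_of_det {a b c d : ℤ} (hdet : a * d - b * c = 1) (hac : Even (a * c)) :
    Odd (a + c) := by
  have : ¬ Even (a * d - b * c) := by rw [hdet]; decide
  simp only [Int.even_sub, Int.even_mul, Int.even_add, ← Int.not_even_iff_odd] at this hac ⊢
  tauto

lemma jacobiTheta₂_add_even (w τ : ℂ) {e : ℤ} (he : Even e) :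
    jacobiTheta₂ w (τ + e) = jacobiTheta₂ w τ := by
  obtain ⟨m, rfl⟩ := he
  simpa [two_mul, mul_two] using (Function.Periodic.int_mul (jacobiTheta₂_add_right w) m) τ

/-- At the point `(w, z)`, the quotient `θ(w, z) / θ(0, z)` transforms under `γ = (a b; c d)`
like a Jacobi form of weight `0` and index `1/2` (written without division). -/
def ThetaQuotientInvariant (a b c d : ℤ) (w z : ℂ) : Prop :=
  cexp (-π * I * c * w ^ 2 / (c * z + d)) *
      jacobiTheta₂ (w / (c * z + d)) ((a * z + b) / (c * z + d)) * jacobiTheta₂ 0 z =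
    jacobiTheta₂ 0 ((a * z + b) / (c * z + d)) * jacobiTheta₂ w z

lemma thetaQuotientInvariant_of_c_eq_zero {a b d : ℤ} (had : a * d = 1)
    (hbd : Even (b * d)) (w z : ℂ) : ThetaQuotientInvariant a b 0 d w z := by
  rcases Int.eq_one_or_neg_one_of_mul_eq_one' had with ⟨rfl, rfl⟩ | ⟨rfl, rfl⟩
  · have hb : Even b := by simpa using hbd
    simp [ThetaQuotientInvariant, jacobiTheta₂_add_even _ _ hb, mul_comm]
  · have hb : Even (-b) := by simpa using hbd
    have hθ (x : ℂ) : jacobiTheta₂ x (-b + z) = jacobiTheta₂ x z := by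
      rw [add_comm]; exact_mod_cast jacobiTheta₂_add_even x z hb
    simp [ThetaQuotientInvariant, hθ, div_neg, jacobiTheta₂_neg_left, mul_comm]

lemma ThetaQuotientInvariant.add_two_mul_iff {a b c d : ℤ} (k : ℤ) {w z : ℂ}
    (hj : (c : ℂ) * z + d ≠ 0) :
    ThetaQuotientInvariant (a + 2 * k * c) (b + 2 * k * d) c d w z ↔
      ThetaQuotientInvariant a b c d w z := by
  have hτ : ((a + 2 * k * c : ℤ) * z + (b + 2 * k * d : ℤ)) / (c * z + d) =
      (a * z + b) / (c * z + d) + (2 * k : ℤ) := by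
    rw [div_add' _ _ _ hj]; push_cast; ring
  simp only [ThetaQuotientInvariant, hτ, jacobiTheta₂_add_even _ _ (even_two_mul k)]

/-- `(-c -d; a b) = Sγ` for `S = (0 -1; 1 0)`, and `Sγ z = -1 / γz`. -/
lemma ThetaQuotientInvariant.of_neg_swap {a b c d : ℤ} (hdet : a * d - b * c = 1) {w z : ℂ}
    (hz : 0 < z.im) (h : ThetaQuotientInvariant (-c) (-d) a b w z) :
    ThetaQuotientInvariant a b c d w z := by
  have hj := int_mul_add_ne_zero_of_det hdet hz
  have hu := int_mul_add_ne_zero_of_det (a := -c) (b := -d) (c := a) (d := b)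
    (by linear_combination hdet) hz
  have hdetC : (a : ℂ) * d - b * c = 1 := by exact_mod_cast hdet
  have hexp : cexp (-π * I * c * w ^ 2 / (c * z + d)) *
      cexp (-π * I * (w / (c * z + d)) ^ 2 / ((a * z + b) / (c * z + d))) =
      cexp (-π * I * a * w ^ 2 / (a * z + b)) := by
    have key : (c : ℂ) * (a * z + b) - a * (c * z + d) = -1 := by linear_combination -hdetC
    rw [← Complex.exp_add]
    congr 1
    generalize (c : ℂ) * z + d = j at hj key ⊢
    generalize (a : ℂ) * z + b = u at hu key ⊢
    field_simp
    linear_combination (-w ^ 2) * key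
  set j := (c : ℂ) * z + d
  set u := (a : ℂ) * z + b
  set τ := u / j
  have hSτ : ((-c : ℤ) * z + (-d : ℤ)) / u = -1 / τ := by
    simp only [τ, u, j]; push_cast; field_simp; ring
  have hθ0 : jacobiTheta₂ 0 τ = 1 / (-I * τ) ^ (1 / 2 : ℂ) * jacobiTheta₂ 0 (-1 / τ) := by
    simpa using jacobiTheta₂_functional_equation 0 τ
  unfold ThetaQuotientInvariant at h ⊢
  rw [hSτ] at h
  rw [jacobiTheta₂_functional_equation (w / j) τ, hθ0,
    show w / j / τ = w / u by simp only [τ]; field_simp]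
  linear_combination (1 / (-I * τ) ^ (1 / 2 : ℂ)) * h +
    (1 / (-I * τ) ^ (1 / 2 : ℂ)) * (jacobiTheta₂ (w / u) (-1 / τ) * jacobiTheta₂ 0 z) * hexp

theorem thetaQuotientInvariant_of_even {a b c d : ℤ} (hdet : a * d - b * c = 1)
    (hac : Even (a * c)) (hbd : Even (b * d)) (w : ℂ) {z : ℂ} (hz : 0 < z.im) :
    ThetaQuotientInvariant a b c d w z := by
  induction hN : c.natAbs using Nat.strong_induction_on generalizing a b c d with
  | _ N ih =>
    rcases eq_or_ne c 0 with rfl | hc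
    · exact thetaQuotientInvariant_of_c_eq_zero (by simpa using hdet) hbd w z
    obtain ⟨k, hk⟩ := exists_natAbs_add_two_mul_lt hc (odd_add_of_det hdet hac)
    have even_step {x y : ℤ} (h : Even (x * y)) : Even (-y * (x + 2 * k * y)) := by
      rw [show -y * (x + 2 * k * y) = -(x * y) + 2 * -(k * y ^ 2) by ring]
      exact h.neg.add (even_two_mul _)
    have hS : ThetaQuotientInvariant (-c) (-d) (a + 2 * k * c) (b + 2 * k * d) w z :=
      ih _ (hN ▸ hk) (by linear_combination hdet) (even_step hac) (even_step hbd) rfl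
    exact (ThetaQuotientInvariant.add_two_mul_iff k (int_mul_add_ne_zero_of_det hdet hz)).mp
      (hS.of_neg_swap (by linear_combination hdet) hz)

lemma cexp_sq_mul_moebius {a b c d : ℤ} (hdet : a * d - b * c = 1) {z : ℂ}
    (hj : (c : ℂ) * z + d ≠ 0) (η : ℂ) :
    cexp (π * I * (η / 2) ^ 2 * ((a * z + b) / (c * z + d))) = eC (a * b * η ^ 2 / 8) *
      cexp (π * I * (a * η / 2) ^ 2 * z) *
      cexp (-π * I * c * (a * η / 2 * z + b * η / 2) ^ 2 / (c * z + d)) := by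
  have key : (a : ℂ) * (c * z + d) - c * (a * z + b) = 1 := by
    linear_combination (by exact_mod_cast hdet : (a : ℂ) * d - b * c = 1)
  simp only [eC, ← Complex.exp_add]
  congr 1
  generalize (c : ℂ) * z + d = j at hj key ⊢
  field_simp
  linear_combination (-8 * η ^ 2 * (a * z + b)) * key

theorem theta_transformation_theta_group
    (a b c d : ℤ) (hdet : a * d - b * c = 1)
    (hac : Even (a * c)) (hbd : Even (b * d))
    (η : ℝ) (z : ℂ) (hz : 0 < z.im) :
    (Summable fun n : ℤ => ‖eC (((n : ℂ) + (η : ℂ) / 2) ^ 2 *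
        (((a : ℂ) * z + (b : ℂ)) / ((c : ℂ) * z + (d : ℂ))) / 2)‖) ∧
      (Summable fun n : ℤ => ‖eC ((n : ℂ) ^ 2 * z / 2)‖) ∧
      (Summable fun n : ℤ => ‖eC ((n : ℂ) ^ 2 *
        (((a : ℂ) * z + (b : ℂ)) / ((c : ℂ) * z + (d : ℂ))) / 2)‖) ∧
      (Summable fun n : ℤ => ‖eC (((n : ℂ) + (a : ℂ) * (η : ℂ) / 2) ^ 2 * z / 2) *
        eC ((n : ℂ) * (b : ℂ) * (η : ℂ) / 2)‖) ∧
      theta2 η 0 (((a : ℂ) * z + (b : ℂ)) / ((c : ℂ) * z + (d : ℂ))) * theta2 0 0 z =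
        eC ((a : ℂ) * (b : ℂ) * (η : ℂ) ^ 2 / 8) *
          theta2 0 0 (((a : ℂ) * z + (b : ℂ)) / ((c : ℂ) * z + (d : ℂ))) *
          ∑' n : ℤ, eC (((n : ℂ) + (a : ℂ) * (η : ℂ) / 2) ^ 2 * z / 2) *
            eC ((n : ℂ) * (b : ℂ) * (η : ℂ) / 2) := by
  set τ := ((a : ℂ) * z + b) / ((c : ℂ) * z + d) with hτ_def
  have hτ : 0 < τ.im := moebius_im_pos hdet hz
  refine ⟨by simpa using summable_norm_eC_sq_mul_eC hτ (η / 2) 0,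
    by simpa using summable_norm_eC_sq_mul_eC hz 0 0,
    by simpa using summable_norm_eC_sq_mul_eC hτ 0 0,
    by simpa only [mul_div_assoc, mul_assoc] using
      summable_norm_eC_sq_mul_eC hz (a * η / 2) (b * η / 2), ?_⟩
  have hj := int_mul_add_ne_zero_of_det hdet hz
  have hinv := thetaQuotientInvariant_of_even hdet hac hbd (a * η / 2 * z + b * η / 2) hz
  have hw : (a * η / 2 * z + b * η / 2) / (c * z + d) = η / 2 * τ := by
    rw [hτ_def]; field_simp
  rw [ThetaQuotientInvariant, hw, ← hτ_def] at hinv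
  have hsum : ∑' n : ℤ, eC ((n + a * η / 2) ^ 2 * z / 2) * eC (n * b * η / 2) =
      cexp (π * I * (a * η / 2) ^ 2 * z) * jacobiTheta₂ (a * η / 2 * z + b * η / 2) z := by
    simpa only [mul_div_assoc, mul_assoc] using tsum_eC_sq_mul_eC (a * η / 2) (b * η / 2) z
  have hexp := cexp_sq_mul_moebius hdet hj η
  rw [← hτ_def] at hexp
  rw [theta2_zero_right, theta2_zero_zero, theta2_zero_zero, hsum]
  linear_combination (jacobiTheta₂ (η / 2 * τ) τ * jacobiTheta₂ 0 z) * hexp +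
    eC (a * b * η ^ 2 / 8) * cexp (π * I * (a * η / 2) ^ 2 * z) * hinv
end
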